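/- arXiv:2204.01990 — 2 statements merged into one kernel-verified Lean document; each statement's English description precedes it below -/
import Mathlib

section
/- Let p > 2 be a prime and τ = (q_1^{s_1},…,q_c^{s_c}) a type, i.e. the weakly decreasing tuple with s_v copies of q_v where q_1 > ⋯ > q_c ≥ 1 and each s_v > 0; let n = s_1 + ⋯ + s_c, e = q_1, n_0 = 0 and n_v = s_1 + ⋯ + s_v. Fix u with n_{b−1} ≤ u < n_b for some 1 ≤ b ≤ c, and z ≥ 1, and let Ξ_{u,z} be the set of types α ≤ τ with u^τ_α = u and largest entry e(α) = z. If Ξ_{u,z} is nonempty, then q_b ≤ z ≤ e. -/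
/-- A (generalized) nonempty type: a weakly decreasing tuple of positive integers,
represented as a list. -/
def IsType (a : List ℕ) : Prop :=
  a ≠ [] ∧ List.Chain' (· ≥ ·) a ∧ ∀ x ∈ a, 1 ≤ x

/-- `(ℓ_1,…,ℓ_m) ≤ (k_1,…,k_n)` iff `m ≤ n` and `ℓ_i ≤ k_i` for all `i ≤ m`. -/
def TypeLe (a t : List ℕ) : Prop :=
  a.length ≤ t.length ∧ ∀ i < a.length, a.getD i 0 ≤ t.getD i 0

/-- `f^τ_α(j) = max ({ i ∈ {1,…,m} : ℓ_i ≥ k_j } ∪ {0})`, indices 1-based. -/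
def fTA (t a : List ℕ) (j : ℕ) : ℕ :=
  ((Finset.Icc 1 a.length).filter (fun i => t.getD (j - 1) 0 ≤ a.getD (i - 1) 0)).sup id

/-- `u^τ_α = max { j − f^τ_α(j) : 1 ≤ j ≤ n }`. -/
def uTA (t a : List ℕ) : ℕ :=
  (Finset.Icc 1 t.length).sup (fun j => j - fTA t a j)

/-- The type `τ = (q_1^{s_1},…,q_c^{s_c})` as a list: `s v` copies of `q v`, in order. -/
def tauList (c : ℕ) (q s : Fin c → ℕ) : List ℕ :=
  (List.finRange c).flatMap (fun v => List.replicate (s v) (q v))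

/-- Partial sums `n_b = s_1 + ⋯ + s_b` (here `b : ℕ`, `nPartial c s 0 = 0`). -/
def nPartial (c : ℕ) (s : Fin c → ℕ) (b : ℕ) : ℕ :=
  ∑ v : Fin c, if (v : ℕ) < b then s v else 0

lemma tauList_succ (c : ℕ) (q s : Fin (c+1) → ℕ) :
    tauList (c+1) q s
      = List.replicate (s 0) (q 0) ++ tauList c (q ∘ Fin.succ) (s ∘ Fin.succ) := by
  simp [tauList, List.finRange_succ, List.flatMap_cons, List.flatMap_map, Function.comp]

lemma nPartial_succ (c : ℕ) (s : Fin (c+1) → ℕ) (m : ℕ) :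
    nPartial (c+1) s (m+1) = s 0 + nPartial c (s ∘ Fin.succ) m := by
  simp [nPartial, Fin.sum_univ_succ, Nat.succ_lt_succ_iff]

lemma nPartial_zero (c : ℕ) (s : Fin c → ℕ) : nPartial c s 0 = 0 := by
  simp [nPartial]

lemma tauList_getD_ge (c : ℕ) (q s : Fin c → ℕ) (hq : Antitone q)
    (b : Fin c) (i : ℕ) (hi : i < nPartial c s ((b : ℕ) + 1)) :
    q b ≤ (tauList c q s).getD i 0 := by
  induction c generalizing i with
  | zero => exact b.elim0
  | succ c ih =>
    rw [tauList_succ]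
    rcases Nat.lt_or_ge i (s 0) with h | h
    · rw [List.getD_append _ _ _ _ (by simpa using h)]
      have hrep : (List.replicate (s 0) (q 0)).getD i 0 = q 0 := by
        simp [List.getD_eq_getElem?_getD, List.getElem?_replicate, h]
      rw [hrep]
      exact hq (Fin.zero_le b)
    · rw [List.getD_append_right _ _ _ _ (by simpa using h)]
      induction b using Fin.cases with
      | zero =>
        exfalso
        simp only [Fin.val_zero] at hi
        rw [nPartial_succ, nPartial_zero] at hi
        omega
      | succ b' =>
        simp only [Fin.val_succ] at hi
        rw [nPartial_succ] at hi
        have := ih (q := q ∘ Fin.succ) (s := s ∘ Fin.succ) (b := b') (i := i - s 0)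
          (hq.comp_monotone (Fin.strictMono_succ).monotone) (by omega)
        simpa using this

lemma tauList_length (c : ℕ) (q s : Fin c → ℕ) :
    (tauList c q s).length = ∑ v : Fin c, s v := by
  rw [tauList, List.length_flatMap]
  simp [Fin.sum_univ_def, Function.comp_def, List.length_replicate]

lemma nPartial_le (c : ℕ) (q s : Fin c → ℕ) (m : ℕ) :
    nPartial c s m ≤ (tauList c q s).length := by
  rw [tauList_length, nPartial]
  exact Finset.sum_le_sum fun v _ => by split <;> simp

lemma mem_tauList (c : ℕ) (q s : Fin c → ℕ) (x : ℕ) (hx : x ∈ tauList c q s) :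
    ∃ v, x = q v := by
  simp only [tauList, List.mem_flatMap, List.mem_replicate] at hx
  obtain ⟨v, _, _, h⟩ := hx
  exact ⟨v, h⟩

lemma getD_le_headI (l : List ℕ) (h : List.Chain' (· ≥ ·) l) (i : ℕ) (hi : i < l.length) :
    l.getD i 0 ≤ l.headI := by
  replace h := List.isChain_iff_pairwise.mp h
  have hmem : l.getD i 0 ∈ l := by
    rw [List.getD_eq_getElem l 0 hi]
    exact List.getElem_mem hi
  cases l with
  | nil => simp at hi
  | cons x t =>
    rw [List.headI_cons]
    rcases List.mem_cons.mp hmem with h1 | h1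
    · exact le_of_eq h1
    · exact (List.pairwise_cons.mp h).1 _ h1

/-- Let `p > 2` be a prime, `τ = (q_1^{s_1},…,q_c^{s_c})` a type with
`q_1 > ⋯ > q_c ≥ 1`, `s_v > 0`.  Fix `u` with `n_{b−1} ≤ u < n_b` (here `b : Fin c`
represents the paper's `b`, so `n_{b-1} = nPartial c s b` and `n_b = nPartial c s (b+1)`)
and `z ≥ 1`.  If some type `α ≤ τ` has `u^τ_α = u` and largest entry `z`
(i.e. `Ξ_{u,z} ≠ ∅`), then `q_b ≤ z ≤ e = q_1`. -/
theorem Xi_nonempty_bounds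
    (p : ℕ) (hp : p.Prime) (hp2 : 2 < p)
    (c : ℕ) (q s : Fin c → ℕ)
    (hq : StrictAnti q) (hq1 : ∀ v, 1 ≤ q v) (hs : ∀ v, 0 < s v)
    (b : Fin c) (u z : ℕ)
    (hu1 : nPartial c s (b : ℕ) ≤ u) (hu2 : u < nPartial c s ((b : ℕ) + 1))
    (hz : 1 ≤ z)
    (a : List ℕ) (ha : IsType a) (hle : TypeLe a (tauList c q s))
    (hua : uTA (tauList c q s) a = u) (hea : a.headI = z) :
    q b ≤ z ∧ z ≤ q ⟨0, b.pos⟩ := by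
  obtain ⟨hane, hchain, _⟩ := ha
  have hqa : Antitone q := hq.antitone
  have halen : 0 < a.length := List.length_pos_iff.mpr hane
  set τ := tauList c q s with hτ
  -- upper bound
  have hub : z ≤ q ⟨0, b.pos⟩ := by
    have h0 : a.getD 0 0 ≤ τ.getD 0 0 := hle.2 0 halen
    have hhead : a.getD 0 0 = a.headI := by
      cases a with
      | nil => simp at hane
      | cons x t => simp
    have hτlen : 0 < τ.length := lt_of_lt_of_le halen hle.1
    have hτmem : τ.getD 0 0 ∈ τ := by
      rw [List.getD_eq_getElem τ 0 hτlen]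
      exact List.getElem_mem hτlen
    obtain ⟨v, hv⟩ := mem_tauList c q s _ hτmem
    calc z = a.getD 0 0 := by rw [hhead, hea]
      _ ≤ τ.getD 0 0 := h0
      _ = q v := hv
      _ ≤ q ⟨0, b.pos⟩ := hqa (by simp [Fin.le_def])
  refine ⟨?_, hub⟩
  -- lower bound
  set N := nPartial c s ((b : ℕ) + 1) with hN
  have hNpos : 0 < N := by
    have : s b ≤ N := by
      rw [hN, nPartial]
      have := Finset.single_le_sum
        (f := fun v : Fin c => if (v : ℕ) < (b : ℕ) + 1 then s v else 0)
        (fun v _ => by positivity) (Finset.mem_univ b)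
      simpa using this
    exact lt_of_lt_of_le (hs b) this
  have hNmem : N ∈ Finset.Icc 1 τ.length := by
    rw [Finset.mem_Icc]
    exact ⟨hNpos, nPartial_le c q s _⟩
  have hle_sup : N - fTA τ a N ≤ u := by
    rw [← hua, uTA]
    exact Finset.le_sup (f := fun j => j - fTA τ a j) hNmem
  have hfpos : 0 < fTA τ a N := by
    by_contra h
    push_neg at h
    interval_cases hf : (fTA τ a N)
    omega
  have hne : ((Finset.Icc 1 a.length).filter
      (fun i => τ.getD (N - 1) 0 ≤ a.getD (i - 1) 0)).Nonempty := by
    by_contra h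
    rw [Finset.not_nonempty_iff_eq_empty] at h
    rw [fTA, h] at hfpos
    simp at hfpos
  obtain ⟨i, hi⟩ := hne
  rw [Finset.mem_filter, Finset.mem_Icc] at hi
  obtain ⟨⟨hi1, hi2⟩, hile⟩ := hi
  have hτge : q b ≤ τ.getD (N - 1) 0 := tauList_getD_ge c q s hqa b (N - 1) (by omega)
  have haz : a.getD (i - 1) 0 ≤ z := by
    rw [← hea]
    exact getD_le_headI a hchain (i - 1) (by omega)
  omega
end

section
/- Let p > 2 be a prime and τ = (k_1,…,k_n) a type with smallest entry q_c = k_n. If α is a type with α ≤ τ and u^τ_α = n, then the largest entry e(α) of α satisfies e(α) < q_c. Conversely, for every z with 1 ≤ z < q_c, the one-entry type (z) satisfies u^τ_{(z)} = n, and (z) ≤ α for every type α ≤ τ with u^τ_α = n and e(α) = z; i.e. (z) is the minimum element of Ξ_{n,z}. -/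
lemma getD_ofFn {n : ℕ} (k : Fin n → ℕ) (i : ℕ) (h : i < n) :
    (List.ofFn k).getD i 0 = k ⟨i, h⟩ := by
  rw [List.getD_eq_getElem _ _ (by simpa)]
  rw [List.getElem_ofFn]


/-- Let `p > 2` be a prime and `τ = (k_1,…,k_n)` a type with smallest
entry `q_c = k_n`.  If `α ≤ τ` is a type with `u^τ_α = n`, then `e(α) < q_c`.
Conversely, for `1 ≤ z < q_c`, the one-entry type `(z)` lies in `Ξ_{n,z}`
(in particular `u^τ_{(z)} = n`) and is its minimum element. -/
theorem Xi_top_description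
    (p : ℕ) (hp : p.Prime) (hp2 : 2 < p)
    (n : ℕ) (hn : 0 < n) (k : Fin n → ℕ)
    (hk : Antitone k) (hk1 : ∀ j, 1 ≤ k j) :
    (∀ a : List ℕ, IsType a → TypeLe a (List.ofFn k) →
      uTA (List.ofFn k) a = n → a.headI < k ⟨n - 1, by omega⟩) ∧
    (∀ z : ℕ, 1 ≤ z → z < k ⟨n - 1, by omega⟩ →
      (IsType [z] ∧ TypeLe [z] (List.ofFn k) ∧
        uTA (List.ofFn k) [z] = n ∧ ([z] : List ℕ).headI = z) ∧
      ∀ a : List ℕ, IsType a → TypeLe a (List.ofFn k) →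
        uTA (List.ofFn k) a = n → a.headI = z → TypeLe [z] a) := by
  have hlen : (List.ofFn k).length = n := List.length_ofFn
  -- key : uTA = n implies head < k (n-1)
  have key : ∀ a : List ℕ, IsType a → uTA (List.ofFn k) a = n →
      a.headI < k ⟨n - 1, by omega⟩ := by
    intro a ha hu
    obtain ⟨x, l, rfl⟩ : ∃ x l, a = x :: l := by
      cases a with
      | nil => exact absurd rfl ha.1
      | cons x l => exact ⟨x, l, rfl⟩
    -- there is j with j - fTA = n
    have hne : (Finset.Icc 1 (List.ofFn k).length).Nonempty := by
      rw [hlen]; exact ⟨1, Finset.mem_Icc.mpr ⟨le_refl 1, hn⟩⟩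
    obtain ⟨j, hjmem, hj⟩ := Finset.exists_mem_eq_sup _ hne (fun j => j - fTA (List.ofFn k) (x :: l) j)
    rw [uTA] at hu
    rw [hu] at hj
    rw [hlen, Finset.mem_Icc] at hjmem
    have hf0 : fTA (List.ofFn k) (x :: l) j = 0 := by omega
    have hjn : j = n := by omega
    subst hjn
    by_contra hlt
    push_neg at hlt
    simp only [List.headI] at hlt
    have h1 : 1 ≤ fTA (List.ofFn k) (x :: l) j := by
      rw [fTA]
      refine Finset.le_sup (f := id) ?_
      rw [Finset.mem_filter, Finset.mem_Icc]
      refine ⟨⟨le_refl 1, by simp⟩, ?_⟩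
      rw [getD_ofFn k (j - 1) (by omega)]
      simpa using hlt
    omega
  refine ⟨fun a ha _ hu => key a ha hu, fun z hz1 hz2 => ?_⟩
  have hzle : ∀ j : ℕ, 1 ≤ j → j ≤ n → fTA (List.ofFn k) [z] j = 0 := by
    intro j hj1 hjn
    rw [fTA]
    apply (Finset.sup_eq_bot_iff _ _).mpr
    intro i hi
    rw [Finset.mem_filter, Finset.mem_Icc] at hi
    exfalso
    have hi1 : i = 1 := by have := hi.1; simp only [List.length_singleton] at this; omega
    have hd : ([z] : List ℕ).getD (i - 1) 0 = z := by simp [hi1]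
    have := hi.2
    rw [hd, getD_ofFn k (j-1) (by omega)] at this
    have hmon : k ⟨n - 1, by omega⟩ ≤ k ⟨j - 1, by omega⟩ :=
      hk (by simp [Fin.le_def]; omega)
    omega
  have huz : uTA (List.ofFn k) [z] = n := by
    rw [uTA, hlen]
    apply le_antisymm
    · apply Finset.sup_le
      intro j hj
      rw [Finset.mem_Icc] at hj
      omega
    · have hmem : n ∈ Finset.Icc 1 n := by rw [Finset.mem_Icc]; omega
      have := Finset.le_sup (f := fun j => j - fTA (List.ofFn k) [z] j) hmem
      simpa [hzle n hn (le_refl n)] using this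
  refine ⟨⟨⟨by simp, List.isChain_singleton z, by simpa using hz1⟩, ⟨by simp [hlen]; omega, ?_⟩, huz, rfl⟩, ?_⟩
  · intro i hi
    simp only [List.length_singleton] at hi
    interval_cases i
    rw [getD_ofFn k 0 hn]
    have : k ⟨n-1, by omega⟩ ≤ k ⟨0, hn⟩ := hk (by simp [Fin.le_def])
    simp
    omega
  · intro a ha hle hu hh
    refine ⟨?_, ?_⟩
    · obtain ⟨x, l, rfl⟩ : ∃ x l, a = x :: l := by
        cases a with
        | nil => exact absurd rfl ha.1
        | cons x l => exact ⟨x, l, rfl⟩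
      simp
    · intro i hi
      simp only [List.length_singleton] at hi
      interval_cases i
      obtain ⟨x, l, rfl⟩ : ∃ x l, a = x :: l := by
        cases a with
        | nil => exact absurd rfl ha.1
        | cons x l => exact ⟨x, l, rfl⟩
      simp only [List.headI] at hh
      simp [hh]
end
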